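/- arXiv:1404.7276 — 4 statements merged into one kernel-verified Lean document; each statement's English description precedes it below -/
import Mathlib

section
/- For every positive integer n, the integral from 0 to 1 of ((1-y)^n - 1 + n·y)/y^2 dy equals n·(ψ(n) + γ - 1) + 1, where ψ is the digamma function and γ is the Euler–Mascheroni constant. -/
open Real MeasureTheory

/-- The digamma function `ψ = Γ'/Γ`. -/
noncomputable def digamma (x : ℝ) : ℝ := deriv Real.Gamma x / Real.Gamma x

lemma poly_id (n : ℕ) (y : ℝ) :
    (1 - y) ^ n - 1 + n * y
      = y ^ 2 * ∑ k ∈ Finset.range n, ∑ j ∈ Finset.range k, (1 - y) ^ j := by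
  induction n with
  | zero => simp
  | succ n ih =>
    have hg : (∑ j ∈ Finset.range n, (1 - y) ^ j) * ((1 - y) - 1) = (1 - y) ^ n - 1 :=
      geom_sum_mul _ _
    rw [Finset.sum_range_succ, mul_add]
    push_cast
    linear_combination ih + y * hg

lemma integral_pow_one_sub (j : ℕ) :
    ∫ y in (0:ℝ)..1, (1 - y) ^ j = 1 / (j + 1) := by
  have h := intervalIntegral.integral_comp_sub_left (fun y : ℝ => y ^ j) 1 (a := 0) (b := 1)
  simp only [sub_zero, sub_self] at h
  rw [h, integral_pow]
  simp

lemma digamma_nat (m : ℕ) :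
    digamma (m + 1) = (harmonic m : ℝ) - Real.eulerMascheroniConstant := by
  unfold digamma
  rw [Real.deriv_Gamma_nat m, Real.Gamma_nat_eq_factorial m]
  have hfac : (m.factorial : ℝ) ≠ 0 := Nat.cast_ne_zero.mpr m.factorial_ne_zero
  field_simp
  ring

lemma sum_harmonic (m : ℕ) :
    ∑ k ∈ Finset.range (m + 1), harmonic k = (m + 1) * harmonic m - m := by
  induction m with
  | zero => simp
  | succ m ih =>
    rw [Finset.sum_range_succ, ih, harmonic_succ]
    push_cast
    field_simp
    ring

theorem integral_one_sub_pow (n : ℕ) (hn : 0 < n) :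
    ∫ y in (0:ℝ)..1, ((1 - y) ^ n - 1 + n * y) / y ^ 2 =
      n * (digamma n + Real.eulerMascheroniConstant - 1) + 1 := by
  obtain ⟨m, rfl⟩ := Nat.exists_eq_add_of_lt hn
  rw [zero_add]
  push_cast
  -- replace integrand by the polynomial
  have heq : ∫ y in (0:ℝ)..1, ((1 - y) ^ (m + 1) - 1 + ((m : ℝ) + 1) * y) / y ^ 2
      = ∫ y in (0:ℝ)..1, ∑ k ∈ Finset.range (m + 1), ∑ j ∈ Finset.range k, (1 - y) ^ j := by
    apply intervalIntegral.integral_congr_ae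
    filter_upwards [] with y hy
    rw [Set.uIoc_of_le (by norm_num : (0:ℝ) ≤ 1)] at hy
    have hy0 : y ≠ 0 := ne_of_gt hy.1
    have hp := poly_id (m + 1) y
    push_cast at hp
    rw [hp, mul_comm, mul_div_assoc, div_self (pow_ne_zero 2 hy0), mul_one]
  rw [heq]
  have hint : ∀ k ∈ Finset.range (m + 1), IntervalIntegrable
      (fun y : ℝ => ∑ j ∈ Finset.range k, (1 - y) ^ j) volume 0 1 := by
    intro k _
    apply Continuous.intervalIntegrable
    continuity
  rw [intervalIntegral.integral_finset_sum hint]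
  have hval : ∀ k ∈ Finset.range (m + 1),
      (∫ y in (0:ℝ)..1, ∑ j ∈ Finset.range k, (1 - y) ^ j) = (harmonic k : ℝ) := by
    intro k _
    rw [intervalIntegral.integral_finset_sum (fun j _ => by
      apply Continuous.intervalIntegrable; continuity)]
    rw [harmonic]
    push_cast
    exact Finset.sum_congr rfl fun j _ => by rw [integral_pow_one_sub]; exact one_div _
  rw [Finset.sum_congr rfl hval]
  have hs : ∑ k ∈ Finset.range (m + 1), (harmonic k : ℝ)
      = (m + 1) * (harmonic m : ℝ) - m := by
    rw [← Rat.cast_sum]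
    rw [sum_harmonic]
    push_cast
    ring
  rw [hs]
  rw [digamma_nat m]
  ring
end

section
/- For real ν, μ with Re ν > 0 and Re μ > 0, the integral from 0 to 1 of (x^{μ-1} - x^{ν-1})/(1-x) dx equals ψ(ν) - ψ(μ). -/
open Real MeasureTheory

open Filter Set Topology

/-!
Replace `1 / (1 - x)` by `(1 - x) ^ (ε - 1)` with `ε > 0`. By the Beta integral the regularized
integral equals `Γ(ε + 1) · ε⁻¹ · (Γ(μ)/Γ(μ + ε) - Γ(ν)/Γ(ν + ε))`, a difference quotient at
`ε = 0` of a function with derivative `ψ(ν) - ψ(μ)` there. As `ε → 0⁺` the regularized integral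
converges to the original one by dominated convergence: `(1 - x) ^ (ε - 1) ≤ (1 - x)⁻¹` and
`|x^a - x^b| ≤ max 1 |a - b| · x^(min a b) · (1 - x)` on `(0, 1]`.
-/

lemma ofReal_rpow_mul_one_sub_rpow {a b x : ℝ} (hx : x ∈ uIcc (0:ℝ) 1) :
    ((x ^ (a - 1) * (1 - x) ^ (b - 1) : ℝ) : ℂ) =
      (x : ℂ) ^ ((a : ℂ) - 1) * (1 - (x : ℂ)) ^ ((b : ℂ) - 1) := by
  rw [uIcc_of_le zero_le_one] at hx
  rw [Complex.ofReal_mul, Complex.ofReal_cpow hx.1, Complex.ofReal_cpow (sub_nonneg.mpr hx.2)]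
  push_cast
  ring

lemma intervalIntegrable_rpow_mul_one_sub_rpow {a b : ℝ} (ha : 0 < a) (hb : 0 < b) :
    IntervalIntegrable (fun x : ℝ => x ^ (a - 1) * (1 - x) ^ (b - 1)) volume 0 1 := by
  have hℂ : IntervalIntegrable
      (fun x : ℝ => ((x ^ (a - 1) * (1 - x) ^ (b - 1) : ℝ) : ℂ)) volume 0 1 :=
    (Complex.betaIntegral_convergent (u := a) (v := b) (by simpa) (by simpa)).congr
      fun x hx => (ofReal_rpow_mul_one_sub_rpow (uIoc_subset_uIcc hx)).symm
  rw [intervalIntegrable_iff] at hℂ ⊢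
  simpa [IntegrableOn] using hℂ.re

lemma integral_rpow_mul_one_sub_rpow {a b : ℝ} (ha : 0 < a) (hb : 0 < b) :
    ∫ x in (0:ℝ)..1, x ^ (a - 1) * (1 - x) ^ (b - 1) = Gamma a * Gamma b / Gamma (a + b) := by
  have hβ := Complex.betaIntegral_eq_Gamma_mul_div a b (by simpa) (by simpa)
  rw [Complex.betaIntegral, ← intervalIntegral.integral_congr fun x hx =>
    ofReal_rpow_mul_one_sub_rpow hx, intervalIntegral.integral_ofReal] at hβ
  simp only [← Complex.ofReal_add, Complex.Gamma_ofReal] at hβ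
  exact_mod_cast hβ

lemma integral_rpow_sub_rpow_mul_one_sub_rpow {μ ν ε : ℝ} (hμ : 0 < μ) (hν : 0 < ν)
    (hε : 0 < ε) :
    ∫ x in (0:ℝ)..1, (x ^ (μ - 1) - x ^ (ν - 1)) * (1 - x) ^ (ε - 1)
      = Gamma (ε + 1) * (ε⁻¹ * (Gamma μ / Gamma (μ + ε) - Gamma ν / Gamma (ν + ε))) := by
  simp_rw [sub_mul]
  rw [intervalIntegral.integral_sub (intervalIntegrable_rpow_mul_one_sub_rpow hμ hε)
    (intervalIntegrable_rpow_mul_one_sub_rpow hν hε), integral_rpow_mul_one_sub_rpow hμ hε,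
    integral_rpow_mul_one_sub_rpow hν hε, Gamma_add_one hε.ne']
  field_simp

lemma hasDerivAt_Gamma_div_Gamma_add {s : ℝ} (hs : ∀ m : ℕ, s ≠ -m) :
    HasDerivAt (fun ε => Gamma s / Gamma (s + ε)) (-digamma s) 0 := by
  have hΓ : HasDerivAt (fun ε => Gamma (s + ε)) (deriv Gamma s) 0 :=
    HasDerivAt.comp_const_add s 0 (by simpa using (differentiableAt_Gamma hs).hasDerivAt)
  refine ((hasDerivAt_const (0:ℝ) (Gamma s)).div hΓ
    (by simpa using Gamma_ne_zero hs)).congr_deriv ?_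
  rw [digamma, add_zero]
  field_simp [Gamma_ne_zero hs]
  ring

lemma one_sub_rpow_le_mul_one_sub {x c : ℝ} (hx0 : 0 ≤ x) (hx1 : x ≤ 1) (hc : 0 ≤ c) :
    1 - x ^ c ≤ max 1 c * (1 - x) := by
  rcases le_total c 1 with hc1 | hc1
  · have : x ≤ x ^ c := by
      simpa using rpow_le_rpow_of_exponent_ge' hx0 hx1 hc hc1
    nlinarith [le_max_left 1 c]
  · have := one_add_mul_self_le_rpow_one_add (s := x - 1) (by linarith) hc1
    rw [add_sub_cancel] at this
    nlinarith [le_max_right 1 c]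

lemma abs_rpow_sub_rpow_le {x a b : ℝ} (hx0 : 0 < x) (hx1 : x ≤ 1) :
    |x ^ a - x ^ b| ≤ max 1 |a - b| * x ^ min a b * (1 - x) := by
  wlog hab : a ≤ b generalizing a b
  · simpa [abs_sub_comm, min_comm] using this (le_of_not_ge hab)
  have hxb : x ^ b = x ^ a * x ^ (b - a) := by rw [← rpow_add hx0, add_sub_cancel]
  have hxa : 0 < x ^ a := rpow_pos_of_pos hx0 a
  have hle := one_sub_rpow_le_mul_one_sub hx0.le hx1 (sub_nonneg.mpr hab)
  have hge : x ^ (b - a) ≤ 1 := rpow_le_one hx0.le hx1 (sub_nonneg.mpr hab)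
  rw [hxb, abs_sub_comm a b, abs_of_nonneg (sub_nonneg.mpr hab), min_eq_left hab,
    abs_of_nonneg (by nlinarith)]
  nlinarith

lemma abs_rpow_sub_rpow_mul_one_sub_rpow_le {x a b ε : ℝ} (hx0 : 0 < x) (hx1 : x < 1)
    (hε : 0 ≤ ε) :
    |(x ^ a - x ^ b) * (1 - x) ^ (ε - 1)| ≤ max 1 |a - b| * x ^ min a b := by
  have h1x : 0 < 1 - x := by linarith
  have hpow : (1 - x) ^ (ε - 1) ≤ (1 - x)⁻¹ := by
    rw [← rpow_neg_one]
    exact rpow_le_rpow_of_exponent_ge h1x (by linarith) (by linarith)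
  calc |(x ^ a - x ^ b) * (1 - x) ^ (ε - 1)|
      = |x ^ a - x ^ b| * (1 - x) ^ (ε - 1) := by
        rw [abs_mul, abs_of_pos (rpow_pos_of_pos h1x _)]
    _ ≤ max 1 |a - b| * x ^ min a b * (1 - x) * (1 - x)⁻¹ :=
        mul_le_mul (abs_rpow_sub_rpow_le hx0 hx1.le) hpow (by positivity) (by positivity)
    _ = max 1 |a - b| * x ^ min a b := by field_simp

lemma tendsto_integral_rpow_sub_rpow_mul_one_sub_rpow {a b : ℝ} (ha : -1 < a) (hb : -1 < b) :
    Tendsto (fun ε : ℝ => ∫ x in (0:ℝ)..1, (x ^ a - x ^ b) * (1 - x) ^ (ε - 1)) (𝓝[>] 0)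
      (𝓝 (∫ x in (0:ℝ)..1, (x ^ a - x ^ b) / (1 - x))) := by
  refine intervalIntegral.tendsto_integral_filter_of_dominated_convergence
    (fun x => max 1 |a - b| * x ^ min a b) (Eventually.of_forall fun ε => ?_) ?_
    ((intervalIntegral.intervalIntegrable_rpow' (lt_min ha hb)).const_mul _) ?_
  · exact Measurable.aestronglyMeasurable (by fun_prop)
  · filter_upwards [self_mem_nhdsWithin] with ε hε
    filter_upwards [volume.ae_ne 1] with x hx1 hx
    rw [uIoc_of_le zero_le_one] at hx
    exact abs_rpow_sub_rpow_mul_one_sub_rpow_le hx.1 (lt_of_le_of_ne hx.2 hx1) (le_of_lt hε)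
  · filter_upwards [volume.ae_ne 1] with x hx1 _
    have hlim : Tendsto (fun ε : ℝ => (1 - x) ^ (ε - 1)) (𝓝[>] 0)
        (𝓝 ((1 - x) ^ ((0:ℝ) - 1))) :=
      ((continuousAt_const_rpow (sub_ne_zero.mpr hx1.symm)).tendsto.comp
        (tendsto_id.sub_const 1)).mono_left nhdsWithin_le_nhds
    rw [zero_sub, rpow_neg_one] at hlim
    exact hlim.const_mul _

theorem integral_digamma_diff (ν μ : ℝ) (hν : 0 < ν) (hμ : 0 < μ) :
    ∫ x in (0:ℝ)..1, (x ^ (μ - 1) - x ^ (ν - 1)) / (1 - x) = digamma ν - digamma μ := by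
  have hpole : ∀ {s : ℝ}, 0 < s → ∀ m : ℕ, s ≠ -m := fun hs m =>
    (neg_nonpos.mpr m.cast_nonneg).trans_lt hs |>.ne'
  set q : ℝ → ℝ := fun ε => Gamma μ / Gamma (μ + ε) - Gamma ν / Gamma (ν + ε)
  have hq : HasDerivAt q (digamma ν - digamma μ) 0 :=
    ((hasDerivAt_Gamma_div_Gamma_add (hpole hμ)).sub
      (hasDerivAt_Gamma_div_Gamma_add (hpole hν))).congr_deriv (by ring)
  have hΓ : Tendsto (fun ε : ℝ => Gamma (ε + 1)) (𝓝[>] 0) (𝓝 1) := by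
    have := hasDerivAt_Gamma_one.continuousAt.comp_of_eq
      (continuous_add_const (1:ℝ)).continuousAt (zero_add 1)
    simpa [Function.comp_def] using this.tendsto.mono_left nhdsWithin_le_nhds
  have hlim := hΓ.mul hq.tendsto_slope_zero_right
  rw [one_mul] at hlim
  refine tendsto_nhds_unique
    (tendsto_integral_rpow_sub_rpow_mul_one_sub_rpow (by linarith) (by linarith)) (hlim.congr' ?_)
  filter_upwards [self_mem_nhdsWithin] with ε hε
  rw [integral_rpow_sub_rpow_mul_one_sub_rpow hμ hν hε]
  simp [q, (Gamma_pos_of_pos hμ).ne', (Gamma_pos_of_pos hν).ne']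
end

section
/- For every positive integer n and every real b with b > 0, the quantity (1/(n-1)!)·d^n/dz^n[(z+b)^{n-1}·log(z-1)] evaluated at z = b+1 equals (1/(2b+1))·(1 + (-1)^{n+1}·(1 + 1/b)^n). -/
/-!
By Leibniz's rule, `dⁿ[(z + a)ⁿ⁻¹ · log (z - c)]` is a sum over `k < n` only (the polynomial
factor dies after `n - 1` derivatives), and in each term the descending factorial from the
polynomial times the factorial `(n - 1 - k)!` from `log` is `(n - 1)!`. What remains is the
binomial expansion of `(1 - (z + a)/(z - c))ⁿ` without its constant term, which gives
`(z + a) · dⁿ[…] = (n - 1)! · (1 - (-(a + c)/(z - c))ⁿ)`; at `a = b`, `c = 1`, `z = b + 1`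
this is the claim.
-/

open Complex

namespace Complex

theorem iteratedDeriv_succ_log_sub_const {c z : ℂ} (hz : z - c ∈ slitPlane) (m : ℕ) :
    iteratedDeriv (m + 1) (fun w ↦ log (w - c)) z = (-1) ^ m * m.factorial / (z - c) ^ (m + 1) := by
  have hexp : -(m : ℤ) - 1 = -((m + 1 : ℕ) : ℤ) := by push_cast; ring
  simp only [iteratedDeriv_comp_sub_const]
  rw [iteratedDeriv_succ_log hz, hexp, zpow_neg, zpow_natCast, div_eq_mul_inv]

theorem iteratedDeriv_add_const_pow (a z : ℂ) (m k : ℕ) :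
    iteratedDeriv k (fun w ↦ (w + a) ^ m) z = m.descFactorial k * (z + a) ^ (m - k) := by
  simp only [iteratedDeriv_comp_add_const (f := (· ^ m)), iteratedDeriv_pow]

theorem iteratedDeriv_add_const_pow_mul_log_sub_const {a c z : ℂ} (hz : z - c ∈ slitPlane)
    (m : ℕ) :
    iteratedDeriv (m + 1) (fun w ↦ (w + a) ^ m * log (w - c)) z =
      m.factorial * ∑ k ∈ Finset.range (m + 1),
        (m + 1).choose k * (z + a) ^ (m - k) * ((-1) ^ (m - k) / (z - c) ^ (m - k + 1)) := by
  have hlog : ContDiffAt ℂ (m + 1 : ℕ) (fun w ↦ log (w - c)) z :=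
    (contDiffAt_log hz).comp z (contDiffAt_id.sub contDiffAt_const)
  rw [iteratedDeriv_fun_mul (by fun_prop) hlog, Finset.sum_range_succ, Finset.mul_sum,
    iteratedDeriv_add_const_pow, Nat.descFactorial_eq_zero_iff_lt.mpr m.lt_succ_self]
  simp only [Nat.cast_zero, zero_mul, mul_zero, add_zero]
  refine Finset.sum_congr rfl fun k hk ↦ ?_
  have hkm : k ≤ m := Nat.lt_succ_iff.mp (Finset.mem_range.mp hk)
  rw [iteratedDeriv_add_const_pow, Nat.sub_add_comm hkm, iteratedDeriv_succ_log_sub_const hz,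
    ← Nat.factorial_mul_descFactorial hkm]
  push_cast
  ring

theorem add_const_mul_iteratedDeriv_add_const_pow_mul_log_sub_const {a c z : ℂ}
    (hz : z - c ∈ slitPlane) (m : ℕ) :
    (z + a) * iteratedDeriv (m + 1) (fun w ↦ (w + a) ^ m * log (w - c)) z =
      m.factorial * (1 - (-(a + c) / (z - c)) ^ (m + 1)) := by
  have hzc : z - c ≠ 0 := slitPlane_ne_zero hz
  have hx : -(a + c) / (z - c) = 1 + -(z + a) / (z - c) := by field_simp; ring
  have hterm : ∀ k ∈ Finset.range (m + 1),
      (z + a) * ((m + 1).choose k * (z + a) ^ (m - k) * ((-1) ^ (m - k) / (z - c) ^ (m - k + 1))) =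
        -(1 ^ k * (-(z + a) / (z - c)) ^ (m + 1 - k) * (m + 1).choose k) := by
    intro k hk
    rw [Nat.sub_add_comm (Nat.lt_succ_iff.mp (Finset.mem_range.mp hk)), div_pow, neg_pow (z + a)]
    field_simp
    ring
  rw [iteratedDeriv_add_const_pow_mul_log_sub_const hz, mul_left_comm, Finset.mul_sum,
    Finset.sum_congr rfl hterm, Finset.sum_neg_distrib, hx, add_pow, Finset.sum_range_succ _ (m + 1)]
  simp only [Nat.sub_self, pow_zero, one_pow, Nat.choose_self, Nat.cast_one, mul_one]
  ring

end Complex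

theorem deriv_pow_mul_log_z_sub_one (n : ℕ) (hn : 0 < n) (b : ℝ) (hb : 0 < b) :
    (1 / ((n - 1).factorial : ℂ)) *
        iteratedDeriv n (fun z : ℂ => (z + (b : ℂ)) ^ (n - 1) * Complex.log (z - 1)) ((b : ℂ) + 1) =
      (1 / (2 * (b : ℂ) + 1)) * (1 + (-1) ^ (n + 1) * (1 + 1 / (b : ℂ)) ^ n) := by
  obtain ⟨m, rfl⟩ := Nat.exists_eq_add_of_lt hn
  rw [zero_add, Nat.add_sub_cancel]
  have hslit : (b : ℂ) + 1 - 1 ∈ slitPlane := by simpa using ofReal_mem_slitPlane.2 hb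
  have key := add_const_mul_iteratedDeriv_add_const_pow_mul_log_sub_const (a := (b : ℂ)) hslit m
  have hb0 : (b : ℂ) ≠ 0 := ofReal_ne_zero.2 hb.ne'
  have h2b : 2 * (b : ℂ) + 1 ≠ 0 := by exact_mod_cast (by positivity : (2 * b + 1 : ℝ) ≠ 0)
  have hfac : (m.factorial : ℂ) ≠ 0 := Nat.cast_ne_zero.2 m.factorial_ne_zero
  rw [add_sub_cancel_right, show (b : ℂ) + 1 + b = 2 * b + 1 by ring, mul_comm] at key
  rw [eq_div_of_mul_eq h2b key, neg_div, neg_pow]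
  field_simp
  ring
end

section
/- Fix a real number b ≥ 0. Define S(n) = Σ_{k=1}^∞ [ (1 - (2b+1)/(2k+b+1))^n - 1 + n(2b+1)/(2k+b+1) ]. Then there exists a constant C (depending on b) such that for all sufficiently large n, S(n) ≥ ((2b+1)/2)·(n·log n + n·γ - n + n·log(2 - 5/(b+3))) - C. -/
/-!
Write `g(u) = (1 - u)^n - 1 + n u = u² G(u)` with `G(u) = ∑_{m<n} ∑_{j<m} (1 - u)^j`. The summands
are `g(u(k))` for `u(x) = (2b+1)/(2x+b+1)`, which decreases from `u(1) = 2 - 5/(b+3) < 2`, while `g`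
increases on `[0, 2]`. So the series dominates `∫_1^{1+n²} g(u(x)) dx`, and the substitution
`u = u(x)` turns this into `(2b+1)/2 · ∫_ε^{u(1)} G` with `ε = O(1/n²)`. Finally
`∫_0^1 G = n H_n - n ≥ n (log n + γ) - n`, `∫_0^ε G ≤ n² ε`, and `G(u) = n/u + ((1-u)^n - 1)/u²`
gives `∫_1^{u(1)} G ≥ n log u(1) - 2`.
-/

open Finset Real intervalIntegral

noncomputable def binomTail (n : ℕ) (u : ℝ) : ℝ := (1 - u) ^ n - 1 + n * u

/-- `binomTail n u / u ^ 2`, written as a polynomial so that it makes sense at `u = 0`. -/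
noncomputable def binomTailDivSq (n : ℕ) (u : ℝ) : ℝ :=
  ∑ m ∈ range n, ∑ j ∈ range m, (1 - u) ^ j

theorem binomTail_eq_sq_mul (n : ℕ) (u : ℝ) : binomTail n u = u ^ 2 * binomTailDivSq n u := by
  induction n with
  | zero => simp [binomTail, binomTailDivSq]
  | succ n ih =>
    have hgeom := mul_neg_geom_sum (1 - u) n
    rw [sub_sub_cancel] at hgeom
    simp only [binomTailDivSq, sum_range_succ] at ih ⊢
    rw [mul_add, ← ih]
    simp only [binomTail]
    push_cast
    linear_combination -u * hgeom

theorem continuous_binomTailDivSq (n : ℕ) : Continuous (binomTailDivSq n) := by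
  unfold binomTailDivSq; fun_prop

theorem binomTailDivSq_eq {u : ℝ} (hu : u ≠ 0) (n : ℕ) :
    binomTailDivSq n u = n / u + ((1 - u) ^ n - 1) / u ^ 2 := by
  have := binomTail_eq_sq_mul n u
  rw [binomTail] at this
  field_simp
  linear_combination -this

theorem abs_one_sub_pow_le_one {u : ℝ} (h0 : 0 ≤ u) (h2 : u ≤ 2) (n : ℕ) :
    |(1 - u) ^ n| ≤ 1 := by
  rw [abs_pow]
  exact pow_le_one₀ (abs_nonneg _) (abs_le.2 ⟨by linarith, by linarith⟩)

theorem binomTailDivSq_le {u : ℝ} (h0 : 0 ≤ u) (h2 : u ≤ 2) (n : ℕ) :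
    binomTailDivSq n u ≤ n ^ 2 := calc
  binomTailDivSq n u ≤ ∑ m ∈ range n, ∑ j ∈ range m, (1 : ℝ) := by
    unfold binomTailDivSq
    gcongr with m _ j _
    exact (le_abs_self _).trans (abs_one_sub_pow_le_one h0 h2 j)
  _ ≤ ∑ m ∈ range n, (n : ℝ) := by
    gcongr with m hm
    simpa using (mem_range.1 hm).le
  _ = n ^ 2 := by simp [sq]

theorem binomTail_nonneg {u : ℝ} (h2 : u ≤ 2) (n : ℕ) : 0 ≤ binomTail n u := by
  have := one_add_mul_le_pow (a := -u) (by linarith) n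
  rw [← sub_eq_add_neg] at this
  simp only [binomTail]
  linarith

theorem binomTail_le {u : ℝ} (h0 : 0 ≤ u) (h2 : u ≤ 2) (n : ℕ) :
    binomTail n u ≤ n ^ 2 * u ^ 2 := by
  rw [binomTail_eq_sq_mul, mul_comm]
  exact mul_le_mul_of_nonneg_right (binomTailDivSq_le h0 h2 n) (sq_nonneg u)

theorem monotoneOn_binomTail (n : ℕ) : MonotoneOn (binomTail n) (Set.Icc 0 2) := by
  intro u hu v hv huv
  have hsum : ∑ i ∈ range n, (1 - u) ^ i * (1 - v) ^ (n - 1 - i) ≤ n := calc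
    _ ≤ ∑ i ∈ range n, (1 : ℝ) := by
      gcongr with i
      refine (le_abs_self _).trans ?_
      rw [abs_mul]
      exact mul_le_one₀ (abs_one_sub_pow_le_one hu.1 hu.2 _) (abs_nonneg _)
        (abs_one_sub_pow_le_one hv.1 hv.2 _)
    _ = n := by simp
  have hgeom := geom_sum₂_mul (1 - u) (1 - v) n
  rw [sub_sub_sub_cancel_left] at hgeom
  simp only [binomTail]
  nlinarith [mul_le_mul_of_nonneg_right hsum (sub_nonneg.2 huv)]

theorem binomTailDivSq_le_div {u : ℝ} (h0 : 0 < u) (h2 : u ≤ 2) (n : ℕ) :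
    binomTailDivSq n u ≤ n / u := by
  have := (abs_le.1 (abs_one_sub_pow_le_one h0.le h2 n)).2
  rw [binomTailDivSq_eq h0.ne']
  linarith [div_nonpos_of_nonpos_of_nonneg (by linarith : (1 - u) ^ n - 1 ≤ 0) (sq_nonneg u)]

theorem div_sub_two_div_sq_le_binomTailDivSq {u : ℝ} (h0 : 0 < u) (h2 : u ≤ 2) (n : ℕ) :
    n / u - 2 / u ^ 2 ≤ binomTailDivSq n u := by
  have := (abs_le.1 (abs_one_sub_pow_le_one h0.le h2 n)).1
  rw [binomTailDivSq_eq h0.ne', sub_eq_add_neg, ← neg_div]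
  gcongr
  linarith

theorem sum_range_harmonic (n : ℕ) : ∑ m ∈ range n, harmonic m = n * harmonic n - n := by
  induction n with
  | zero => simp
  | succ n ih =>
    rw [sum_range_succ, ih, harmonic_succ]
    push_cast
    field_simp
    ring

theorem integral_binomTailDivSq_zero_one (n : ℕ) :
    ∫ u in (0 : ℝ)..1, binomTailDivSq n u = n * harmonic n - n := by
  have hpow (j : ℕ) : ∫ u in (0 : ℝ)..1, (1 - u) ^ j = ((j : ℝ) + 1)⁻¹ := by
    simp [integral_comp_sub_left (fun u => u ^ j)]
  have hint (j : ℕ) : IntervalIntegrable (fun u : ℝ => (1 - u) ^ j) MeasureTheory.volume 0 1 :=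
    (by fun_prop : Continuous fun u : ℝ => (1 - u) ^ j).intervalIntegrable _ _
  simp only [binomTailDivSq]
  rw [integral_finsetSum fun m _ =>
    (continuous_finsetSum _ fun j _ => by fun_prop).intervalIntegrable _ _]
  simp_rw [integral_finsetSum fun j _ => hint j, hpow]
  have := congrArg (Rat.cast : ℚ → ℝ) (sum_range_harmonic n)
  push_cast [harmonic] at this ⊢
  exact this

theorem log_add_eulerMascheroniConstant_le_harmonic {n : ℕ} (hn : n ≠ 0) :
    log n + eulerMascheroniConstant ≤ harmonic n := by
  have := eulerMascheroniConstant_lt_eulerMascheroniSeq' n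
  rw [eulerMascheroniSeq', if_neg hn] at this
  linarith

theorem mul_log_sub_two_le_integral_binomTailDivSq {c : ℝ} (h0 : 0 < c) (h2 : c ≤ 2) (n : ℕ) :
    n * log c - 2 ≤ ∫ u in (1 : ℝ)..c, binomTailDivSq n u := by
  have hzero : (0 : ℝ) ∉ Set.uIcc 1 c := fun h => by
    rcases Set.mem_uIcc.1 h with h | h <;> linarith [h.1, h.2]
  have hinv : IntervalIntegrable (fun u : ℝ => n * u⁻¹) MeasureTheory.volume 1 c :=
    (intervalIntegrable_inv_iff.2 (Or.inr hzero)).const_mul _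
  have hlog : ∫ u in (1 : ℝ)..c, n * u⁻¹ = n * log c := by
    rw [integral_const_mul, integral_inv hzero, div_one]
  have hG (p q : ℝ) : IntervalIntegrable (binomTailDivSq n) MeasureTheory.volume p q :=
    (continuous_binomTailDivSq n).intervalIntegrable p q
  rcases le_total 1 c with h1 | h1
  · have hlower (u : ℝ) (hu : u ∈ Set.Icc 1 c) : (n : ℝ) * u⁻¹ - 2 ≤ binomTailDivSq n u := by
      have hu0 : 0 < u := by linarith [hu.1]
      have : 2 / u ^ 2 ≤ 2 := div_le_self zero_le_two (one_le_pow₀ hu.1)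
      rw [← div_eq_mul_inv]
      linarith [div_sub_two_div_sq_le_binomTailDivSq hu0 (hu.2.trans h2) n]
    have hle := integral_mono_on h1 (hinv.sub intervalIntegrable_const) (hG 1 c) hlower
    rw [integral_sub hinv intervalIntegrable_const, hlog, integral_const, smul_eq_mul] at hle
    linarith
  · have hle := integral_mono_on h1 (hG c 1) hinv.symm fun u hu => by
      rw [← div_eq_mul_inv]
      exact binomTailDivSq_le_div (by linarith [hu.1]) (by linarith [hu.2]) n
    rw [integral_symm 1 c, integral_symm 1 c, hlog] at hle
    linarith

theorem integral_binomTailDivSq_ge {n : ℕ} (hn : n ≠ 0) {ε c : ℝ} (hε0 : 0 ≤ ε)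
    (hε2 : ε ≤ 2) (hc0 : 0 < c) (hc2 : c ≤ 2) :
    n * (log n + eulerMascheroniConstant) - n + n * log c - 2 - n ^ 2 * ε ≤
      ∫ u in ε..c, binomTailDivSq n u := by
  have hG (p q : ℝ) : IntervalIntegrable (binomTailDivSq n) MeasureTheory.volume p q :=
    (continuous_binomTailDivSq n).intervalIntegrable p q
  have hsplit : ∫ u in ε..c, binomTailDivSq n u =
      (∫ u in (0 : ℝ)..1, binomTailDivSq n u) - (∫ u in (0 : ℝ)..ε, binomTailDivSq n u)
        + ∫ u in (1 : ℝ)..c, binomTailDivSq n u := by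
    rw [integral_interval_sub_left (hG 0 1) (hG 0 ε),
      integral_add_adjacent_intervals (hG ε 1) (hG 1 c)]
  have hsmall := integral_mono_on hε0 (hG 0 ε) intervalIntegrable_const fun u hu =>
    binomTailDivSq_le hu.1 (hu.2.trans hε2) n
  rw [integral_const, smul_eq_mul, sub_zero] at hsmall
  have hharmonic := mul_le_mul_of_nonneg_left (log_add_eulerMascheroniConstant_le_harmonic hn)
    (Nat.cast_nonneg (α := ℝ) n)
  rw [hsplit, integral_binomTailDivSq_zero_one]
  linarith [mul_log_sub_two_le_integral_binomTailDivSq hc0 hc2 n]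

theorem integral_sq_mul_comp_div_linear {f : ℝ → ℝ} (hf : Continuous f) (a : ℝ)
    {s c p q : ℝ} (hs : s ≠ 0) (hne : ∀ x ∈ Set.uIcc p q, s * x + c ≠ 0) :
    ∫ x in p..q, (a / (s * x + c)) ^ 2 * f (a / (s * x + c)) =
      a / s * ∫ u in a / (s * q + c)..a / (s * p + c), f u := by
  have hderiv (x : ℝ) (hx : x ∈ Set.uIcc p q) :
      HasDerivAt (fun x => a / (s * x + c)) (-(a * s) / (s * x + c) ^ 2) x :=
    ((hasDerivAt_const x a).fun_div (((hasDerivAt_id' x).const_mul s).add_const c)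
      (hne x hx)).congr_deriv (by ring)
  have hcont : ContinuousOn (fun x => -(a * s) / (s * x + c) ^ 2) (Set.uIcc p q) :=
    continuousOn_const.div (by fun_prop) fun x hx => pow_ne_zero 2 (hne x hx)
  calc ∫ x in p..q, (a / (s * x + c)) ^ 2 * f (a / (s * x + c))
      = -(a / s) *
          ∫ x in p..q, (f ∘ fun x => a / (s * x + c)) x * (-(a * s) / (s * x + c) ^ 2) := by
        rw [← integral_const_mul]
        refine integral_congr fun x hx => ?_
        simp only [Function.comp_apply]
        field_simp [hne x hx]
    _ = a / s * ∫ u in a / (s * q + c)..a / (s * p + c), f u := by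
        rw [integral_comp_mul_deriv hderiv hcont hf, integral_symm]
        ring

theorem integral_binomTail_comp_div_linear (n : ℕ) (a : ℝ) {s c p q : ℝ}
    (hs : s ≠ 0) (hne : ∀ x ∈ Set.uIcc p q, s * x + c ≠ 0) :
    ∫ x in p..q, binomTail n (a / (s * x + c)) =
      a / s * ∫ u in a / (s * q + c)..a / (s * p + c), binomTailDivSq n u := by
  simp_rw [binomTail_eq_sq_mul]
  exact integral_sq_mul_comp_div_linear (continuous_binomTailDivSq n) a hs hne

section ComparisonWithSeries

variable {a s c : ℝ}

theorem div_linear_mem_Icc (ha : 0 ≤ a) (hs : 0 < s) (hc : 0 ≤ c)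
    (h2 : a ≤ 2 * (s + c)) {x : ℝ} (hx : 1 ≤ x) :
    a / (s * x + c) ∈ Set.Icc 0 2 := by
  have hsc : s + c ≤ s * x + c := by nlinarith
  refine ⟨by positivity, ?_⟩
  calc a / (s * x + c) ≤ a / (s + c) := div_le_div_of_nonneg_left ha (by linarith) hsc
    _ ≤ 2 := by rw [div_le_iff₀ (by linarith)]; linarith

theorem antitoneOn_binomTail_comp_div_linear (ha : 0 ≤ a) (hs : 0 < s) (hc : 0 ≤ c)
    (h2 : a ≤ 2 * (s + c)) (n : ℕ) :
    AntitoneOn (fun x => binomTail n (a / (s * x + c))) (Set.Ici 1) := fun x hx y hy hxy =>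
  monotoneOn_binomTail n (div_linear_mem_Icc ha hs hc h2 hy) (div_linear_mem_Icc ha hs hc h2 hx)
    (div_le_div_of_nonneg_left ha (by nlinarith [Set.mem_Ici.1 hx]) (by gcongr))

theorem summable_binomTail_comp_div_linear (ha : 0 ≤ a) (hs : 0 < s) (hc : 0 ≤ c)
    (h2 : a ≤ 2 * (s + c)) (n : ℕ) :
    Summable fun k : ℕ => binomTail n (a / (s * (k + 1) + c)) := by
  have hbase := (summable_nat_add_iff 1).2 (summable_one_div_nat_pow.2 one_lt_two)
  push_cast at hbase
  refine Summable.of_nonneg_of_le (fun k => binomTail_nonneg ?_ n) (fun k => ?_)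
    (hbase.mul_left (n ^ 2 * (a / s) ^ 2))
  · exact (div_linear_mem_Icc ha hs hc h2 (by simp)).2
  · have hmem := div_linear_mem_Icc ha hs hc h2 (x := k + 1) (by simp)
    calc binomTail n (a / (s * (k + 1) + c)) ≤ n ^ 2 * (a / (s * (k + 1) + c)) ^ 2 :=
          binomTail_le hmem.1 hmem.2 n
      _ ≤ n ^ 2 * (a / (s * (k + 1))) ^ 2 := by
          gcongr
          exact le_add_of_nonneg_right hc
      _ = n ^ 2 * (a / s) ^ 2 * (1 / ((k : ℝ) + 1) ^ 2) := by
          field_simp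

theorem integral_le_tsum_binomTail_comp_div_linear (ha : 0 ≤ a) (hs : 0 < s) (hc : 0 ≤ c)
    (h2 : a ≤ 2 * (s + c)) (n M : ℕ) :
    ∫ x in (1 : ℝ)..1 + M, binomTail n (a / (s * x + c)) ≤
      ∑' k : ℕ, binomTail n (a / (s * (k + 1) + c)) := calc
  _ ≤ ∑ i ∈ range M, binomTail n (a / (s * (1 + i) + c)) :=
    (antitoneOn_binomTail_comp_div_linear ha hs hc h2 n).mono Set.Icc_subset_Ici_self
      |>.integral_le_sum
  _ ≤ _ := by
    simp_rw [add_comm (1 : ℝ)]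
    exact (summable_binomTail_comp_div_linear ha hs hc h2 n).sum_le_tsum _ fun k _ =>
      binomTail_nonneg (div_linear_mem_Icc ha hs hc h2 (by simp)).2 n

end ComparisonWithSeries

theorem generalized_li_sum_lower_bound (b : ℝ) (hb : 0 ≤ b) :
    ∃ C : ℝ, ∃ N : ℕ, ∀ n : ℕ, N ≤ n →
      ((2 * b + 1) / 2) * ((n : ℝ) * Real.log n + n * Real.eulerMascheroniConstant - n
          + n * Real.log (2 - 5 / (b + 3))) - C ≤
        ∑' k : ℕ, ((1 - (2 * b + 1) / (2 * ((k : ℝ) + 1) + b + 1)) ^ n - 1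
          + n * (2 * b + 1) / (2 * ((k : ℝ) + 1) + b + 1)) := by
  refine ⟨(2 * b + 1) / 2 * ((2 * b + 1) / 2 + 2), 1, fun n hn => ?_⟩
  have ha : 0 ≤ 2 * b + 1 := by linarith
  have hc : 0 ≤ b + 1 := by linarith
  have h2 : 2 * b + 1 ≤ 2 * (2 + (b + 1)) := by linarith
  have hterm (k : ℕ) : (1 - (2 * b + 1) / (2 * ((k : ℝ) + 1) + b + 1)) ^ n - 1
      + n * (2 * b + 1) / (2 * ((k : ℝ) + 1) + b + 1)
      = binomTail n ((2 * b + 1) / (2 * ((k : ℝ) + 1) + (b + 1))) := by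
    rw [binomTail, ← add_assoc, mul_div_assoc]
  have hu0 : (2 * b + 1) / (2 * 1 + (b + 1)) = 2 - 5 / (b + 3) := by
    field_simp
    ring
  set ε := (2 * b + 1) / (2 * (1 + ((n ^ 2 : ℕ) : ℝ)) + (b + 1))
  have hε := div_linear_mem_Icc ha two_pos hc h2 (x := 1 + ((n ^ 2 : ℕ) : ℝ)) (by simp)
  have hu0mem := div_linear_mem_Icc ha two_pos hc h2 le_rfl
  have hnε : (n : ℝ) ^ 2 * ε ≤ (2 * b + 1) / 2 := by
    rw [mul_div_assoc', div_le_div_iff₀ (by positivity) two_pos]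
    push_cast
    nlinarith
  have hsubst := integral_binomTail_comp_div_linear n (2 * b + 1) (s := 2) (c := b + 1)
    (p := 1) (q := 1 + ((n ^ 2 : ℕ) : ℝ)) two_ne_zero fun x hx => by
      rw [Set.uIcc_of_le (by simp)] at hx
      linarith [hx.1]
  have hint := integral_binomTailDivSq_ge (n := n) (by omega) hε.1 hε.2
    (by positivity) hu0mem.2
  rw [tsum_congr hterm, ← hu0]
  have hseries := integral_le_tsum_binomTail_comp_div_linear ha two_pos hc h2 n (n ^ 2)
  rw [hsubst] at hseries
  have ha2 : 0 ≤ (2 * b + 1) / 2 := by positivity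
  linarith [mul_le_mul_of_nonneg_left hint ha2, mul_le_mul_of_nonneg_left hnε ha2]
end
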